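/- arXiv:2601.15329 — 4 statements merged into one kernel-verified Lean document; each statement's English description precedes it below -/
import Mathlib

section
/- Lyapunov's inequality: if f is continuous on [a,b], twice differentiable on (a,b), positive on (a,b), and f(a) = f(b) = 0, then the integral over (a,b) of |f''|/f is strictly greater than 4/(b-a) (in the extended reals, allowing the integral to be infinite). -/
/-!
Let `c` be the first point where `f` attains its maximum `M > 0`. The mean value theorem gives
`x₁ ∈ (a, c)` and `x₂ ∈ (c, b)` with `f' x₁ = M / (c - a)` and `f' x₂ = -M / (b - c)`, while
`f' c = 0`. Since `f ≤ M`,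
`∫ |f''| / f ≥ (∫_{x₁}^{c} |f''| + ∫_{c}^{x₂} |f''|) / M ≥ 1 / (c - a) + 1 / (b - c) ≥ 4 / (b - a)`.
The first inequality is strict on `(x₁, c)`: there `f < M`, and `f''` cannot vanish almost
everywhere because `f'` drops from `M / (c - a)` to `0`.
-/

open MeasureTheory Set

lemma four_div_add_le_inv_add_inv {x y : ℝ} (hx : 0 < x) (hy : 0 < y) :
    4 / (x + y) ≤ x⁻¹ + y⁻¹ := by
  rw [inv_add_inv hx.ne' hy.ne', div_le_div_iff₀ (by positivity) (by positivity)]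
  nlinarith [sq_nonneg (x - y)]

lemma exists_isMaxOn_Icc_forall_Ico_lt {f : ℝ → ℝ} {a b : ℝ} (hab : a ≤ b)
    (hf : ContinuousOn f (Icc a b)) :
    ∃ c ∈ Icc a b, IsMaxOn f (Icc a b) c ∧ ∀ y ∈ Ico a c, f y < f c := by
  obtain ⟨c₀, hc₀, hmax⟩ := isCompact_Icc.exists_isMaxOn (nonempty_Icc.2 hab) hf
  have hS : IsCompact (Icc a b ∩ f ⁻¹' {f c₀}) :=
    isCompact_Icc.of_isClosed_subset
      (hf.preimage_isClosed_of_isClosed isClosed_Icc isClosed_singleton) inter_subset_left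
  obtain ⟨c, ⟨hc, hfc⟩, hleast⟩ := hS.exists_isLeast ⟨c₀, hc₀, rfl⟩
  have hmax' : IsMaxOn f (Icc a b) c := fun x hx => (hfc : f c = f c₀) ▸ hmax hx
  refine ⟨c, hc, hmax', fun y hy => ?_⟩
  have hyI : y ∈ Icc a b := ⟨hy.1, hy.2.le.trans hc.2⟩
  refine (hmax' hyI).lt_of_ne fun hfy => hy.2.not_ge (hleast ⟨hyI, ?_⟩)
  exact hfy.trans hfc

lemma exists_isMaxOn_Icc_mem_Ioo_forall_Ico_lt {f : ℝ → ℝ} {a b : ℝ} (hab : a ≤ b)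
    (hf : ContinuousOn f (Icc a b)) (hpos : ∃ x ∈ Icc a b, 0 < f x) (ha : f a ≤ 0) (hb : f b ≤ 0) :
    ∃ c ∈ Ioo a b, 0 < f c ∧ IsMaxOn f (Icc a b) c ∧ ∀ y ∈ Ico a c, f y < f c := by
  obtain ⟨c, hc, hmax, hfirst⟩ := exists_isMaxOn_Icc_forall_Ico_lt hab hf
  obtain ⟨x, hx, hfx⟩ := hpos
  have hM : 0 < f c := hfx.trans_le (hmax hx)
  refine ⟨c, ⟨hc.1.lt_of_ne ?_, hc.2.lt_of_ne ?_⟩, hM, hmax, hfirst⟩ <;>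
    · rintro rfl
      linarith

lemma ofReal_abs_sub_le_lintegral_abs_deriv {g : ℝ → ℝ} {u v : ℝ} (huv : u ≤ v)
    (hg : ∀ x ∈ Icc u v, DifferentiableAt ℝ g x) :
    ENNReal.ofReal |g v - g u| ≤ ∫⁻ x in Ioo u v, ENNReal.ofReal |deriv g x| := by
  by_cases hfin : ∫⁻ x in Ioo u v, ENNReal.ofReal |deriv g x| = ⊤
  · simp [hfin]
  have hint : IntegrableOn (deriv g) (Ioo u v) :=
    ⟨(measurable_deriv g).aestronglyMeasurable, by
      simpa [HasFiniteIntegral, Real.enorm_eq_ofReal_abs] using lt_top_iff_ne_top.2 hfin⟩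
  have hftc : ∫ x in Ioo u v, deriv g x = g v - g u := by
    rw [← integral_Ioc_eq_integral_Ioo, ← intervalIntegral.integral_of_le huv]
    refine intervalIntegral.integral_eq_sub_of_hasDerivAt (fun x hx => (hg x ?_).hasDerivAt) ?_
    · rwa [uIcc_of_le huv] at hx
    · rwa [intervalIntegrable_iff_integrableOn_Ioo_of_le huv]
  rw [← ofReal_integral_eq_lintegral_ofReal hint.abs (ae_of_all _ fun _ => abs_nonneg _), ← hftc]
  exact ENNReal.ofReal_le_ofReal abs_integral_le_integral_abs

section Weight

variable {s : Set ℝ} {f g : ℝ → ℝ} {K M : ℝ}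

lemma ofReal_div_le_setLIntegral_abs_div_const (hM : 0 < M)
    (hK : ENNReal.ofReal K ≤ ∫⁻ x in s, ENNReal.ofReal |g x|) :
    ENNReal.ofReal (K / M) ≤ ∫⁻ x in s, ENNReal.ofReal (|g x| / M) := by
  simp_rw [ENNReal.ofReal_div_of_pos hM, div_eq_mul_inv]
  rw [lintegral_mul_const' _ _ (ENNReal.inv_ne_top.2 (ENNReal.ofReal_pos.2 hM).ne')]
  gcongr

lemma setLIntegral_abs_div_const_le (hs : MeasurableSet s) (hf : ∀ x ∈ s, 0 < f x ∧ f x ≤ M) :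
    ∫⁻ x in s, ENNReal.ofReal (|g x| / M) ≤ ∫⁻ x in s, ENNReal.ofReal (|g x| / f x) :=
  setLIntegral_mono' hs fun x hx =>
    ENNReal.ofReal_le_ofReal (div_le_div_of_nonneg_left (abs_nonneg _) (hf x hx).1 (hf x hx).2)

lemma ofReal_div_le_setLIntegral_abs_div (hs : MeasurableSet s) (hM : 0 < M)
    (hf : ∀ x ∈ s, 0 < f x ∧ f x ≤ M)
    (hK : ENNReal.ofReal K ≤ ∫⁻ x in s, ENNReal.ofReal |g x|) :
    ENNReal.ofReal (K / M) ≤ ∫⁻ x in s, ENNReal.ofReal (|g x| / f x) :=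
  (ofReal_div_le_setLIntegral_abs_div_const hM hK).trans (setLIntegral_abs_div_const_le hs hf)

lemma ofReal_div_lt_setLIntegral_abs_div (hs : MeasurableSet s) (hg : Measurable g)
    (hfc : ContinuousOn f s) (hM : 0 < M) (hf : ∀ x ∈ s, 0 < f x ∧ f x < M) (hK₀ : 0 < K)
    (hK : ENNReal.ofReal K ≤ ∫⁻ x in s, ENNReal.ofReal |g x|) :
    ENNReal.ofReal (K / M) < ∫⁻ x in s, ENNReal.ofReal (|g x| / f x) := by
  have hle : ∀ x ∈ s, 0 < f x ∧ f x ≤ M := fun x hx => ⟨(hf x hx).1, (hf x hx).2.le⟩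
  by_cases hfin : ∫⁻ x in s, ENNReal.ofReal (|g x| / M) = ⊤
  · exact ENNReal.ofReal_lt_top.trans_le (hfin ▸ setLIntegral_abs_div_const_le hs hle)
  have hg_ne : ∃ᵐ x ∂volume.restrict s, g x ≠ 0 := by
    intro hg0
    have hzero : ∫⁻ x in s, ENNReal.ofReal |g x| = 0 :=
      lintegral_eq_zero_of_ae_eq_zero <| hg0.mono fun x hx => by simp [not_not.1 hx]
    exact (ENNReal.ofReal_pos.2 hK₀).ne' (nonpos_iff_eq_zero.1 (hzero ▸ hK))
  refine (ofReal_div_le_setLIntegral_abs_div_const hM hK).trans_lt <|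
    lintegral_strict_mono_of_ae_le_of_frequently_ae_lt
      (hg.abs.aemeasurable.div (hfc.aemeasurable hs)).ennreal_ofReal hfin
      ((ae_restrict_iff' hs).2 (ae_of_all _ fun x hx => ?_))
      ((hg_ne.and_eventually (ae_restrict_mem hs)).mono fun x hx => ?_)
  · exact ENNReal.ofReal_le_ofReal (div_le_div_of_nonneg_left (abs_nonneg _) (hle x hx).1
      (hle x hx).2)
  · refine (ENNReal.ofReal_lt_ofReal_iff_of_nonneg (by positivity)).2 ?_ |>.ne
    exact div_lt_div_of_pos_left (abs_pos.2 hx.1) (hf x hx.2).1 (hf x hx.2).2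

end Weight

theorem lyapunov_inequality (a b : ℝ) (f : ℝ → ℝ) (hab : a < b)
    (hc : ContinuousOn f (Icc a b))
    (hd1 : ∀ x ∈ Ioo a b, DifferentiableAt ℝ f x)
    (hd2 : ∀ x ∈ Ioo a b, DifferentiableAt ℝ (deriv f) x)
    (hpos : ∀ x ∈ Ioo a b, 0 < f x)
    (ha : f a = 0) (hb : f b = 0) :
    ENNReal.ofReal (4 / (b - a)) <
      ∫⁻ x in Ioo a b, ENNReal.ofReal (|deriv (deriv f) x| / f x) := by
  have hmid : (a + b) / 2 ∈ Ioo a b := ⟨by linarith, by linarith⟩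
  obtain ⟨c, ⟨hac, hcb⟩, hM, hmax, hfirst⟩ := exists_isMaxOn_Icc_mem_Ioo_forall_Ico_lt hab.le hc
    ⟨_, Ioo_subset_Icc_self hmid, hpos _ hmid⟩ ha.le hb.le
  have hf'c : deriv f c = 0 := (hmax.isLocalMax (Icc_mem_nhds hac hcb)).deriv_eq_zero
  obtain ⟨x₁, hx₁, hslope₁⟩ := exists_deriv_eq_slope f hac (hc.mono (Icc_subset_Icc_right hcb.le))
    fun x hx => (hd1 x ⟨hx.1, hx.2.trans hcb⟩).differentiableWithinAt
  obtain ⟨x₂, hx₂, hslope₂⟩ := exists_deriv_eq_slope f hcb (hc.mono (Icc_subset_Icc_left hac.le))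
    fun x hx => (hd1 x ⟨hac.trans hx.1, hx.2⟩).differentiableWithinAt
  have hvar₁ := ofReal_abs_sub_le_lintegral_abs_deriv hx₁.2.le
    fun x hx => hd2 x (Icc_subset_Ioo hx₁.1 hcb hx)
  rw [hf'c, hslope₁, ha, zero_sub, sub_zero, abs_neg, abs_of_pos (by bound)] at hvar₁
  have hvar₂ := ofReal_abs_sub_le_lintegral_abs_deriv hx₂.1.le
    fun x hx => hd2 x (Icc_subset_Ioo hac hx₂.2 hx)
  rw [hf'c, hslope₂, hb, sub_zero, zero_sub, neg_div, abs_neg, abs_of_pos (by bound)] at hvar₂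
  have hIoo₁ : Ioo x₁ c ⊆ Ioo a b := Ioo_subset_Ioo hx₁.1.le hcb.le
  have hIoo₂ : Ioo c x₂ ⊆ Ioo a b := Ioo_subset_Ioo hac.le hx₂.2.le
  have hlt₁ := ofReal_div_lt_setLIntegral_abs_div measurableSet_Ioo (measurable_deriv _)
    (hc.mono (hIoo₁.trans Ioo_subset_Icc_self)) hM
    (fun x hx => ⟨hpos x (hIoo₁ hx), hfirst x ⟨(hIoo₁ hx).1.le, hx.2⟩⟩) (by bound) hvar₁
  have hle₂ := ofReal_div_le_setLIntegral_abs_div measurableSet_Ioo hM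
    (fun x hx => ⟨hpos x (hIoo₂ hx), hmax (Ioo_subset_Icc_self (hIoo₂ hx))⟩) hvar₂
  rw [div_div_cancel_left' hM.ne'] at hlt₁ hle₂
  calc ENNReal.ofReal (4 / (b - a))
      ≤ ENNReal.ofReal (c - a)⁻¹ + ENNReal.ofReal (b - c)⁻¹ := by
        rw [← ENNReal.ofReal_add (by bound) (by bound)]
        refine ENNReal.ofReal_le_ofReal ?_
        simpa only [sub_add_sub_cancel'] using
          four_div_add_le_inv_add_inv (sub_pos.2 hac) (sub_pos.2 hcb)
    _ < (∫⁻ x in Ioo x₁ c, ENNReal.ofReal (|deriv (deriv f) x| / f x)) +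
        ∫⁻ x in Ioo c x₂, ENNReal.ofReal (|deriv (deriv f) x| / f x) :=
      ENNReal.add_lt_add_of_lt_of_le ENNReal.ofReal_ne_top hlt₁ hle₂
    _ ≤ ∫⁻ x in Ioo a b, ENNReal.ofReal (|deriv (deriv f) x| / f x) := by
      rw [← lintegral_union measurableSet_Ioo (disjoint_left.2 fun _ h₁ h₂ => lt_asymm h₁.2 h₂.1)]
      exact lintegral_mono_set (union_subset hIoo₁ hIoo₂)
end

section
/- The constant 4 in Lyapunov's inequality is optimal: for every ε > 0 there exists a function f that is continuous on [0,1], twice continuously differentiable on (0,1), positive on (0,1) with f(0) = f(1) = 0, such that ∫_{0}^{1} |f''|/f < 4 + ε. -/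
open MeasureTheory Set

/-!
The tent `min (2x) (2 - 2x)` has peak value `1`, and its `f''` is `-4` times the Dirac mass at
`1/2`. Smooth its corner by prescribing `f'' = -H` with `H ≥ 0` a continuous bump of mass `4`
supported in `[1/2 - δ, 1/2 + δ]`; then `f` is still the tent outside that interval and at least `1 - 6δ`
inside it, so `∫ |f''| / f ≤ (∫ H) / (1 - 6δ) = 4 / (1 - 6δ)`, which tends to `4` as `δ → 0`.
-/

theorem setLIntegral_ofReal_div_le {α : Type*} [MeasurableSpace α] {μ : Measure α} {s : Set α}
    {h g : α → ℝ} {m : ℝ} (hm : 0 < m) (hs : MeasurableSet s) (hint : IntegrableOn h s μ)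
    (h_nonneg : ∀ x ∈ s, 0 ≤ h x) (hg : ∀ x ∈ s, h x ≠ 0 → m ≤ g x) :
    ∫⁻ x in s, ENNReal.ofReal (h x / g x) ∂μ ≤ ENNReal.ofReal ((∫ x in s, h x ∂μ) / m) := by
  calc ∫⁻ x in s, ENNReal.ofReal (h x / g x) ∂μ
      ≤ ∫⁻ x in s, ENNReal.ofReal (h x / m) ∂μ := by
        refine setLIntegral_mono' hs fun x hx => ENNReal.ofReal_le_ofReal ?_
        by_cases hx0 : h x = 0
        · simp [hx0]
        · exact div_le_div_of_nonneg_left (h_nonneg x hx) hm (hg x hx hx0)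
    _ = ENNReal.ofReal ((∫ x in s, h x ∂μ) / m) := by
        rw [← MeasureTheory.integral_div]
        exact (ofReal_integral_eq_lintegral_ofReal (hint.div_const m)
          ((ae_restrict_iff' hs).2 (ae_of_all _ fun x hx => div_nonneg (h_nonneg x hx) hm.le))).symm

theorem intervalIntegral_eq_zero_of_eqOn_Iic {f : ℝ → ℝ} {a x : ℝ} (hx : x ≤ a)
    (hf : EqOn f 0 (Iic a)) : ∫ t in a..x, f t = 0 := by
  rw [intervalIntegral.integral_congr (g := fun _ => 0) fun t ht =>
    hf (by rw [uIcc_of_ge hx] at ht; exact ht.2), intervalIntegral.integral_zero]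

theorem intervalIntegral_eq_add_of_eqOn_Ici {f : ℝ → ℝ} (hf : Continuous f) {a b x c : ℝ}
    (hx : b ≤ x) (hc : EqOn f (fun _ => c) (Ici b)) :
    ∫ t in a..x, f t = (∫ t in a..b, f t) + (x - b) * c := by
  have hright : ∫ t in b..x, f t = (x - b) * c := by
    rw [intervalIntegral.integral_congr (g := fun _ => c) fun t ht =>
      hc (by rw [uIcc_of_le hx] at ht; exact ht.1), intervalIntegral.integral_const, smul_eq_mul]
  rw [← intervalIntegral.integral_add_adjacent_intervals (hf.intervalIntegrable a b)
    (hf.intervalIntegrable b x), hright]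

-- The factor `3 / δ ^ 3` gives mass `4`, the drop of the tent's slope from `2` to `-2`.
noncomputable def parabolicBump (δ t : ℝ) : ℝ := 3 / δ ^ 3 * max (δ ^ 2 - (t - 1 / 2) ^ 2) 0

noncomputable def bumpPrimitive (δ x : ℝ) : ℝ := ∫ t in (1 / 2 - δ)..x, parabolicBump δ t

noncomputable def smoothedTent (δ x : ℝ) : ℝ := 2 * x - ∫ t in (1 / 2 - δ)..x, bumpPrimitive δ t

section

variable {δ : ℝ}

theorem continuous_parabolicBump (δ : ℝ) : Continuous (parabolicBump δ) := by
  unfold parabolicBump; fun_prop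

theorem parabolicBump_nonneg (hδ : 0 < δ) (t : ℝ) : 0 ≤ parabolicBump δ t :=
  mul_nonneg (by positivity) (le_max_right _ _)

theorem parabolicBump_eq_zero (hδ : 0 < δ) {t : ℝ} (ht : t ∉ Ioo (1 / 2 - δ) (1 / 2 + δ)) :
    parabolicBump δ t = 0 := by
  have : δ ^ 2 ≤ (t - 1 / 2) ^ 2 := by
    rw [mem_Ioo, not_and_or, not_lt, not_lt] at ht
    rcases ht with ht | ht <;> nlinarith
  rw [parabolicBump, max_eq_right (by linarith), mul_zero]

theorem parabolicBump_eq_of_mem_Icc {t : ℝ} (ht : t ∈ Icc (1 / 2 - δ) (1 / 2 + δ)) :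
    parabolicBump δ t = 3 / δ ^ 3 * (δ ^ 2 - (t - 1 / 2) ^ 2) := by
  rw [parabolicBump, max_eq_left]
  nlinarith [ht.1, ht.2]

theorem hasDerivAt_bumpPrimitive (δ x : ℝ) :
    HasDerivAt (bumpPrimitive δ) (parabolicBump δ x) x :=
  ((continuous_parabolicBump δ).integral_hasStrictDerivAt _ x).hasDerivAt

theorem continuous_bumpPrimitive (δ : ℝ) : Continuous (bumpPrimitive δ) :=
  continuous_iff_continuousAt.2 fun x => (hasDerivAt_bumpPrimitive δ x).continuousAt

theorem monotone_bumpPrimitive (hδ : 0 < δ) : Monotone (bumpPrimitive δ) :=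
  monotone_of_deriv_nonneg (fun x => (hasDerivAt_bumpPrimitive δ x).differentiableAt)
    fun x => (hasDerivAt_bumpPrimitive δ x).deriv ▸ parabolicBump_nonneg hδ x

theorem bumpPrimitive_of_le (hδ : 0 < δ) {x : ℝ} (hx : x ≤ 1 / 2 - δ) :
    bumpPrimitive δ x = 0 :=
  intervalIntegral_eq_zero_of_eqOn_Iic hx fun _ ht =>
    parabolicBump_eq_zero hδ fun h => (h.1.trans_le ht).false

theorem bumpPrimitive_eq_of_mem_Icc (hδ : 0 < δ) {x : ℝ}
    (hx : x ∈ Icc (1 / 2 - δ) (1 / 2 + δ)) :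
    bumpPrimitive δ x = 3 / δ ^ 3 * (δ ^ 2 * (x - 1 / 2) - (x - 1 / 2) ^ 3 / 3) + 2 := by
  rw [bumpPrimitive,
    intervalIntegral.integral_congr (g := fun t => 3 / δ ^ 3 * (δ ^ 2 - (t - 1 / 2) ^ 2))]
  · simp only [intervalIntegral.integral_const_mul,
      intervalIntegral.integral_comp_sub_right (fun u => δ ^ 2 - u ^ 2), sub_sub_cancel_left,
      intervalIntegral.integral_sub intervalIntegrable_const
        (intervalIntegral.intervalIntegrable_pow _),
      intervalIntegral.integral_const, smul_eq_mul, integral_pow]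
    field_simp
    ring
  · intro t ht
    rw [uIcc_of_le hx.1] at ht
    exact parabolicBump_eq_of_mem_Icc ⟨ht.1, ht.2.trans hx.2⟩

theorem bumpPrimitive_of_ge (hδ : 0 < δ) {x : ℝ} (hx : 1 / 2 + δ ≤ x) :
    bumpPrimitive δ x = 4 := by
  have hb : bumpPrimitive δ (1 / 2 + δ) = 4 := by
    rw [bumpPrimitive_eq_of_mem_Icc hδ ⟨by linarith, le_rfl⟩]
    field_simp
    ring
  rw [bumpPrimitive, intervalIntegral_eq_add_of_eqOn_Ici (continuous_parabolicBump δ) hx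
    (c := 0) fun _ ht => parabolicBump_eq_zero hδ fun h => (h.2.trans_le ht).false]
  rw [← bumpPrimitive, hb]
  ring

theorem bumpPrimitive_le_four (hδ : 0 < δ) (x : ℝ) : bumpPrimitive δ x ≤ 4 :=
  (monotone_bumpPrimitive hδ (le_max_left x (1 / 2 + δ))).trans_eq
    (bumpPrimitive_of_ge hδ (le_max_right _ _))

-- Only the constant `2` survives: the rest of the integrand is odd about `1/2`.
theorem integral_bumpPrimitive (hδ : 0 < δ) :
    ∫ t in (1 / 2 - δ)..(1 / 2 + δ), bumpPrimitive δ t = 4 * δ := by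
  rw [intervalIntegral.integral_congr
    (g := fun t => 3 / δ ^ 3 * (δ ^ 2 * (t - 1 / 2) - (t - 1 / 2) ^ 3 / 3) + 2)]
  · simp only [sub_sub_cancel_left, add_sub_cancel_left,
      intervalIntegral.integral_comp_sub_right (fun u => 3 / δ ^ 3 * (δ ^ 2 * u - u ^ 3 / 3) + 2)]
    have hint {f : ℝ → ℝ} (hf : Continuous f) : IntervalIntegrable f volume (-δ) δ :=
      hf.intervalIntegrable _ _
    rw [intervalIntegral.integral_add (hint (by fun_prop)) (hint (by fun_prop)),
      intervalIntegral.integral_const_mul,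
      intervalIntegral.integral_sub (hint (by fun_prop)) (hint (by fun_prop))]
    simp [intervalIntegral.integral_const_mul (δ ^ 2) fun x => x]
    ring
  · intro t ht
    rw [uIcc_of_le (by linarith)] at ht
    exact bumpPrimitive_eq_of_mem_Icc hδ ht

theorem hasDerivAt_smoothedTent (δ x : ℝ) :
    HasDerivAt (smoothedTent δ) (2 - bumpPrimitive δ x) x := by
  have h := ((continuous_bumpPrimitive δ).integral_hasStrictDerivAt (1 / 2 - δ) x).hasDerivAt
  have hlin : HasDerivAt (fun y => 2 * y) 2 x := by simpa using (hasDerivAt_id x).const_mul 2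
  exact hlin.sub h

theorem deriv_smoothedTent (δ : ℝ) : deriv (smoothedTent δ) = fun x => 2 - bumpPrimitive δ x :=
  funext fun x => (hasDerivAt_smoothedTent δ x).deriv

theorem hasDerivAt_deriv_smoothedTent (δ x : ℝ) :
    HasDerivAt (deriv (smoothedTent δ)) (-parabolicBump δ x) x := by
  simpa [deriv_smoothedTent] using (hasDerivAt_bumpPrimitive δ x).const_sub 2

theorem deriv_deriv_smoothedTent (δ : ℝ) :
    deriv (deriv (smoothedTent δ)) = fun x => -parabolicBump δ x :=
  funext fun x => (hasDerivAt_deriv_smoothedTent δ x).deriv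

theorem contDiff_smoothedTent (δ : ℝ) : ContDiff ℝ 2 (smoothedTent δ) := by
  rw [show (2 : WithTop ℕ∞) = 1 + 1 from rfl, contDiff_succ_iff_deriv, contDiff_one_iff_deriv,
    deriv_deriv_smoothedTent]
  exact ⟨fun x => (hasDerivAt_smoothedTent δ x).differentiableAt, by simp,
    fun x => (hasDerivAt_deriv_smoothedTent δ x).differentiableAt,
    (continuous_parabolicBump δ).neg⟩

theorem smoothedTent_of_le (hδ : 0 < δ) {x : ℝ} (hx : x ≤ 1 / 2 - δ) :
    smoothedTent δ x = 2 * x := by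
  rw [smoothedTent, sub_eq_self]
  exact intervalIntegral_eq_zero_of_eqOn_Iic hx fun _ ht => bumpPrimitive_of_le hδ ht

theorem smoothedTent_of_ge (hδ : 0 < δ) {x : ℝ} (hx : 1 / 2 + δ ≤ x) :
    smoothedTent δ x = 2 - 2 * x := by
  rw [smoothedTent, intervalIntegral_eq_add_of_eqOn_Ici (continuous_bumpPrimitive δ) hx
    fun _ ht => bumpPrimitive_of_ge hδ ht, integral_bumpPrimitive hδ]
  ring

theorem one_sub_six_mul_le_smoothedTent (hδ : 0 < δ) {x : ℝ}
    (hx : x ∈ Icc (1 / 2 - δ) (1 / 2 + δ)) :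
    1 - 6 * δ ≤ smoothedTent δ x := by
  have h : ∫ t in (1 / 2 - δ)..x, bumpPrimitive δ t ≤ ∫ t in (1 / 2 - δ)..x, (4 : ℝ) :=
    intervalIntegral.integral_mono_on hx.1 ((continuous_bumpPrimitive δ).intervalIntegrable _ _)
      intervalIntegrable_const fun t _ => bumpPrimitive_le_four hδ t
  rw [intervalIntegral.integral_const, smul_eq_mul] at h
  rw [smoothedTent]
  nlinarith [hx.2]

theorem smoothedTent_pos (hδ : 0 < δ) (hδ' : 6 * δ < 1) {x : ℝ} (hx : x ∈ Ioo 0 1) :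
    0 < smoothedTent δ x := by
  rcases le_or_gt x (1 / 2 - δ) with hl | hl
  · rw [smoothedTent_of_le hδ hl]; linarith [hx.1]
  rcases le_or_gt (1 / 2 + δ) x with hr | hr
  · rw [smoothedTent_of_ge hδ hr]; linarith [hx.2]
  · linarith [one_sub_six_mul_le_smoothedTent hδ ⟨hl.le, hr.le⟩]

theorem setIntegral_parabolicBump (hδ : 0 < δ) (hδ' : δ < 1 / 2) :
    ∫ x in Ioo 0 1, parabolicBump δ x = 4 := by
  rw [← integral_Ioc_eq_integral_Ioo, ← intervalIntegral.integral_of_le zero_le_one,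
    ← intervalIntegral.integral_interval_sub_left
      ((continuous_parabolicBump δ).intervalIntegrable _ _)
      ((continuous_parabolicBump δ).intervalIntegrable _ _)]
  change bumpPrimitive δ 1 - bumpPrimitive δ 0 = 4
  rw [bumpPrimitive_of_ge hδ (by linarith), bumpPrimitive_of_le hδ (by linarith), sub_zero]

theorem lintegral_abs_deriv_deriv_smoothedTent_div_le (hδ : 0 < δ) (hδ' : 6 * δ < 1) :
    ∫⁻ x in Ioo 0 1, ENNReal.ofReal (|deriv (deriv (smoothedTent δ)) x| / smoothedTent δ x) ≤
      ENNReal.ofReal (4 / (1 - 6 * δ)) := by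
  simp only [deriv_deriv_smoothedTent, abs_neg, abs_of_nonneg (parabolicBump_nonneg hδ _)]
  rw [← setIntegral_parabolicBump hδ (by linarith)]
  exact setLIntegral_ofReal_div_le (by linarith) measurableSet_Ioo
    ((continuous_parabolicBump δ).integrableOn_Icc.mono_set Ioo_subset_Icc_self)
    (fun x _ => parabolicBump_nonneg hδ x)
    fun x _ hx => one_sub_six_mul_le_smoothedTent hδ
      (Ioo_subset_Icc_self (not_imp_comm.1 (parabolicBump_eq_zero hδ) hx))

end

theorem lyapunov_constant_optimal :
    ∀ ε : ℝ, 0 < ε → ∃ f : ℝ → ℝ,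
      ContinuousOn f (Icc 0 1) ∧
      ContDiffOn ℝ 2 f (Ioo 0 1) ∧
      (∀ x ∈ Ioo (0:ℝ) 1, 0 < f x) ∧
      f 0 = 0 ∧ f 1 = 0 ∧
      (∫⁻ x in Ioo (0:ℝ) 1, ENNReal.ofReal (|deriv (deriv f) x| / f x)) <
        ENNReal.ofReal (4 + ε) := by
  intro ε hε
  set δ := ε / (8 * (4 + ε)) with hδ_def
  have hδ : 0 < δ := by positivity
  have hδε : 6 * δ * (4 + ε) = 3 / 4 * ε := by rw [hδ_def]; field_simp; ring
  have hδ' : 6 * δ < 1 := by nlinarith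
  refine ⟨smoothedTent δ, (contDiff_smoothedTent δ).continuous.continuousOn,
    (contDiff_smoothedTent δ).contDiffOn, fun x hx => smoothedTent_pos hδ hδ' hx,
    by simpa using smoothedTent_of_le hδ (x := 0) (by linarith),
    by simpa using smoothedTent_of_ge hδ (x := 1) (by linarith), ?_⟩
  refine (lintegral_abs_deriv_deriv_smoothedTent_div_le hδ hδ').trans_lt ?_
  rw [ENNReal.ofReal_lt_ofReal_iff (by positivity), div_lt_iff₀ (by linarith)]
  nlinarith
end

section
/- If f is continuous on [a,b], differentiable on (a,b), positive on (a,b), f(a) = f(b) = 0, and the integral ∫_a^b |f''|/f equals exactly 4/(b-a) (i.e., equality in Lyapunov's bound with non-strict ≥ derived from the maximum estimate), then a contradiction arises: equality in the first step of the proof forces f to be constant, hence zero. Formally: the inequality ∫_a^b |f''|/f ≥ 4/(b-a) can never be an equality under the stated hypotheses. -/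
/-!
Let `c` be a maximum point of `f`, so `f c = M > 0` and `f' c = 0`. The mean value theorem gives
`ξ₁ < c < ξ₂` with `f' ξ₁ = M / (c - a)` and `f' ξ₂ = -M / (b - c)`, and since `f ≤ M`,
`∫ₐᵇ |f''| / f ≥ (1 / M) ∫_{ξ₁}^{ξ₂} |f''| ≥ (f' ξ₁ - f' ξ₂) / M = 1 / (c - a) + 1 / (b - c)`,
which is at least `4 / (b - a)`.
If equality held, `f''` would vanish a.e. on `(a, ξ₁)`, so `f` would be affine with slope
`M / (c - a)` on `[a, ξ₁]`, and then `f` would have the same slope on `[ξ₁, c]`; the mean value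
theorem produces a point of `(ξ₁, c)` where `f' = M / (c - a)`. Choosing `ξ₁` as the last such
point before `c` (it exists as `f' c = 0`) makes this a contradiction.
-/

open MeasureTheory Set

lemma abs_le_mul_abs_div {t y M : ℝ} (hy : 0 < y) (hyM : y ≤ M) : |t| ≤ M * (|t| / y) := by
  rw [mul_div_assoc', le_div_iff₀ hy]
  exact mul_le_mul_of_nonneg_left hyM (abs_nonneg t) |>.trans_eq (mul_comm _ _)

section AbsDiv

variable {α : Type*} [MeasurableSpace α] {μ : Measure α} {s : Set α} {f h : α → ℝ} {M : ℝ}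

lemma MeasureTheory.IntegrableOn.of_abs_div (hs : MeasurableSet s)
    (hh : AEStronglyMeasurable h (μ.restrict s))
    (hint : IntegrableOn (fun x => |h x| / f x) s μ) (hpos : ∀ x ∈ s, 0 < f x)
    (hM : ∀ x ∈ s, f x ≤ M) : IntegrableOn h s μ :=
  (hint.const_mul M).mono' hh <| (ae_restrict_mem hs).mono fun x hx =>
    abs_le_mul_abs_div (hpos x hx) (hM x hx)

lemma setIntegral_abs_le_mul_setIntegral_abs_div (hs : MeasurableSet s)
    (hh : AEStronglyMeasurable h (μ.restrict s))
    (hint : IntegrableOn (fun x => |h x| / f x) s μ) (hpos : ∀ x ∈ s, 0 < f x)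
    (hM : ∀ x ∈ s, f x ≤ M) :
    ∫ x in s, |h x| ∂μ ≤ M * ∫ x in s, |h x| / f x ∂μ := by
  rw [← integral_const_mul]
  exact setIntegral_mono_on (hint.of_abs_div hs hh hpos hM).abs (hint.const_mul M) hs
    fun x hx => abs_le_mul_abs_div (hpos x hx) (hM x hx)

lemma ae_restrict_eq_zero_of_setIntegral_abs_div_nonpos (hs : MeasurableSet s)
    (hint : IntegrableOn (fun x => |h x| / f x) s μ) (hpos : ∀ x ∈ s, 0 < f x)
    (h0 : ∫ x in s, |h x| / f x ∂μ ≤ 0) : ∀ᵐ x ∂μ.restrict s, h x = 0 := by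
  have hnn : 0 ≤ᵐ[μ.restrict s] fun x => |h x| / f x :=
    (ae_restrict_mem hs).mono fun x hx => div_nonneg (abs_nonneg _) (hpos x hx).le
  have hzero := (integral_eq_zero_iff_of_nonneg_ae hnn hint).1
    (le_antisymm h0 (integral_nonneg_of_ae hnn))
  filter_upwards [hzero, ae_restrict_mem hs] with x hx hxs
  simpa [(hpos x hxs).ne'] using hx

end AbsDiv

lemma setIntegral_add_setIntegral_le {α : Type*} [MeasurableSpace α] {μ : Measure α}
    {s t u : Set α} {g : α → ℝ} (hst : Disjoint s t) (ht : MeasurableSet t) (hsu : s ⊆ u)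
    (htu : t ⊆ u) (hg : IntegrableOn g u μ) (hnn : 0 ≤ᵐ[μ.restrict u] g) :
    ∫ x in s, g x ∂μ + ∫ x in t, g x ∂μ ≤ ∫ x in u, g x ∂μ := by
  rw [← setIntegral_union hst ht (hg.mono_set hsu) (hg.mono_set htu)]
  exact setIntegral_mono_set hg hnn (union_subset hsu htu).eventuallyLE

lemma abs_sub_le_mul_setIntegral_abs_deriv_div {F f : ℝ → ℝ} {u v M : ℝ} (huv : u ≤ v)
    (hF : ∀ x ∈ Icc u v, DifferentiableAt ℝ F x)
    (hint : IntegrableOn (fun x => |deriv F x| / f x) (Ioo u v))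
    (hpos : ∀ x ∈ Ioo u v, 0 < f x) (hM : ∀ x ∈ Ioo u v, f x ≤ M) :
    |F v - F u| ≤ M * ∫ x in Ioo u v, |deriv F x| / f x := by
  have hmeas := (measurable_deriv F).aestronglyMeasurable (μ := volume.restrict (Ioo u v))
  have hII : IntervalIntegrable (deriv F) volume u v :=
    (intervalIntegrable_iff_integrableOn_Ioo_of_le huv).2
      (hint.of_abs_div measurableSet_Ioo hmeas hpos hM)
  calc |F v - F u| = |∫ x in u..v, deriv F x| := by
        rw [intervalIntegral.integral_deriv_eq_sub (fun x hx => hF x (uIcc_of_le huv ▸ hx)) hII]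
    _ ≤ ∫ x in u..v, |deriv F x| := intervalIntegral.abs_integral_le_integral_abs huv
    _ = ∫ x in Ioo u v, |deriv F x| := by
        rw [intervalIntegral.integral_of_le huv, integral_Ioc_eq_integral_Ioo]
    _ ≤ M * ∫ x in Ioo u v, |deriv F x| / f x :=
        setIntegral_abs_le_mul_setIntegral_abs_div measurableSet_Ioo hmeas hint hpos hM

lemma eq_of_ae_restrict_deriv_eq_zero {F : ℝ → ℝ} {u v : ℝ}
    (hF : ∀ x ∈ Ioc u v, DifferentiableAt ℝ F x)
    (h0 : ∀ᵐ x ∂volume.restrict (Ioo u v), deriv F x = 0) : ∀ x ∈ Ioc u v, F x = F v := by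
  intro x hx
  have h0x : ∀ᵐ y ∂volume.restrict (Ioo x v), deriv F y = 0 :=
    ae_restrict_of_ae_restrict_of_subset (Ioo_subset_Ioo_left hx.1.le) h0
  have hII : IntervalIntegrable (deriv F) volume x v :=
    (intervalIntegrable_iff_integrableOn_Ioo_of_le hx.2).2
      ((integrable_zero _ _ _).congr (h0x.mono fun _ hy => hy.symm))
  have hFTC := intervalIntegral.integral_deriv_eq_sub
    (fun y hy => hF y ⟨hx.1.trans_le (uIcc_of_le hx.2 ▸ hy).1, (uIcc_of_le hx.2 ▸ hy).2⟩) hII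
  rw [intervalIntegral.integral_of_le hx.2, integral_Ioc_eq_integral_Ioo,
    integral_eq_zero_of_ae h0x] at hFTC
  linarith

lemma eq_of_setIntegral_abs_deriv_div_nonpos {F f : ℝ → ℝ} {u v : ℝ}
    (hF : ∀ x ∈ Ioc u v, DifferentiableAt ℝ F x)
    (hint : IntegrableOn (fun x => |deriv F x| / f x) (Ioo u v))
    (hpos : ∀ x ∈ Ioo u v, 0 < f x) (h0 : ∫ x in Ioo u v, |deriv F x| / f x ≤ 0) :
    ∀ x ∈ Ioc u v, F x = F v :=
  eq_of_ae_restrict_deriv_eq_zero hF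
    (ae_restrict_eq_zero_of_setIntegral_abs_div_nonpos measurableSet_Ioo hint hpos h0)

lemma exists_last_eq_of_continuousOn {β : Type*} [TopologicalSpace β] [T1Space β]
    {F : ℝ → β} {u v : ℝ} {k : β} (hF : ContinuousOn F (Icc u v)) (huv : u ≤ v)
    (hu : F u = k) (hv : F v ≠ k) : ∃ w ∈ Ico u v, F w = k ∧ ∀ x ∈ Ioo w v, F x ≠ k := by
  obtain ⟨w, ⟨hw, hwk⟩, hmax⟩ := (isCompact_Icc.of_isClosed_subset
    (hF.preimage_isClosed_of_isClosed isClosed_Icc (isClosed_singleton (x := k)))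
    inter_subset_left).exists_isGreatest
    ⟨u, ⟨left_mem_Icc.2 huv, hu⟩⟩
  refine ⟨w, ⟨hw.1, hw.2.lt_of_ne fun h => hv (h ▸ hwk)⟩, hwk, fun x hx hxk => ?_⟩
  exact (hmax ⟨⟨hw.1.trans hx.1.le, hx.2.le⟩, hxk⟩).not_gt hx.1

lemma four_div_le_inv_add_inv {x y : ℝ} (hx : 0 < x) (hy : 0 < y) :
    4 / (x + y) ≤ 1 / x + 1 / y := by
  rw [div_add_div _ _ hx.ne' hy.ne', div_le_div_iff₀ (by positivity) (by positivity)]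
  nlinarith [sq_nonneg (x - y)]

lemma exists_isMaxOn_mem_Ioo {f : ℝ → ℝ} {a b : ℝ} (hab : a < b) (hc : ContinuousOn f (Icc a b))
    (ha : f a = 0) (hb : f b = 0) (hpos : ∀ x ∈ Ioo a b, 0 < f x) :
    ∃ c ∈ Ioo a b, IsMaxOn f (Icc a b) c := by
  obtain ⟨c, hc, hmax⟩ := isCompact_Icc.exists_isMaxOn (nonempty_Icc.2 hab.le) hc
  have hmid : (a + b) / 2 ∈ Ioo a b := ⟨by linarith, by linarith⟩
  have hfc : 0 < f c := (hpos _ hmid).trans_le (hmax (Ioo_subset_Icc_self hmid))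
  refine ⟨c, ⟨hc.1.lt_of_ne ?_, hc.2.lt_of_ne ?_⟩, hmax⟩ <;> rintro rfl <;> simp_all

lemma exists_deriv_eq_of_deriv_eq_on_Ioo {f : ℝ → ℝ} {a ξ c k : ℝ} (haξ : a < ξ) (hξc : ξ < c)
    (hf : ContinuousOn f (Icc a c)) (hd : DifferentiableOn ℝ f (Ioo a c))
    (hk : ∀ x ∈ Ioo a ξ, deriv f x = k) (hslope : f c - f a = k * (c - a)) :
    ∃ ζ ∈ Ioo ξ c, deriv f ζ = k := by
  obtain ⟨η, hη, hηk⟩ := exists_deriv_eq_slope f haξ (hf.mono (Icc_subset_Icc_right hξc.le))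
    (hd.mono (Ioo_subset_Ioo_right hξc.le))
  obtain ⟨ζ, hζ, hζk⟩ := exists_deriv_eq_slope f hξc (hf.mono (Icc_subset_Icc_left haξ.le))
    (hd.mono (Ioo_subset_Ioo_left haξ.le))
  rw [hk η hη, eq_div_iff (sub_pos.2 haξ).ne'] at hηk
  refine ⟨ζ, hζ, hζk.trans ?_⟩
  rw [div_eq_iff (sub_pos.2 hξc).ne']
  linarith

lemma four_div_le_setIntegral_abs_deriv_deriv_div {f : ℝ → ℝ} {a b c ξ₁ ξ₂ : ℝ}
    (hξ₁ : ξ₁ ∈ Ioo a c) (hξ₂ : ξ₂ ∈ Ioo c b) (hpos : ∀ x ∈ Ioo ξ₁ ξ₂, 0 < f x)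
    (hmax : ∀ x ∈ Ioo ξ₁ ξ₂, f x ≤ f c)
    (hd2 : ∀ x ∈ Icc ξ₁ ξ₂, DifferentiableAt ℝ (deriv f) x)
    (hint : IntegrableOn (fun x => |deriv (deriv f) x| / f x) (Ioo ξ₁ ξ₂))
    (h₁ : deriv f ξ₁ = f c / (c - a)) (h₂ : deriv f ξ₂ = -f c / (b - c)) :
    4 / (b - a) ≤ ∫ x in Ioo ξ₁ ξ₂, |deriv (deriv f) x| / f x := by
  have hfc : 0 < f c := hpos c ⟨hξ₁.2, hξ₂.1⟩
  have hca : 0 < c - a := sub_pos.2 (hξ₁.1.trans hξ₁.2)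
  have hbc : 0 < b - c := sub_pos.2 (hξ₂.1.trans hξ₂.2)
  have hjump := abs_sub_le_mul_setIntegral_abs_deriv_div (hξ₁.2.trans hξ₂.1).le hd2 hint hpos hmax
  rw [h₁, h₂, neg_div, ← neg_add', abs_neg, abs_of_pos (by positivity)] at hjump
  calc 4 / (b - a) ≤ 1 / (b - c) + 1 / (c - a) := by
        simpa using four_div_le_inv_add_inv hbc hca
    _ = (f c / (b - c) + f c / (c - a)) / f c := by field_simp
    _ ≤ _ := by rwa [div_le_iff₀ hfc, mul_comm]

lemma four_div_add_setIntegral_Ioo_le {f : ℝ → ℝ} {a b c ξ₁ ξ₂ : ℝ}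
    (hξ₁ : ξ₁ ∈ Ioo a c) (hξ₂ : ξ₂ ∈ Ioo c b) (hpos : ∀ x ∈ Ioo a b, 0 < f x)
    (hmax : IsMaxOn f (Icc a b) c) (hd2 : ∀ x ∈ Ioo a b, DifferentiableAt ℝ (deriv f) x)
    (hint : IntegrableOn (fun x => |deriv (deriv f) x| / f x) (Ioo a b))
    (h₁ : deriv f ξ₁ = f c / (c - a)) (h₂ : deriv f ξ₂ = -f c / (b - c)) :
    4 / (b - a) + ∫ x in Ioo a ξ₁, |deriv (deriv f) x| / f x ≤
      ∫ x in Ioo a b, |deriv (deriv f) x| / f x := by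
  have hsub : Ioo ξ₁ ξ₂ ⊆ Ioo a b := Ioo_subset_Ioo hξ₁.1.le hξ₂.2.le
  have hmiddle := four_div_le_setIntegral_abs_deriv_deriv_div hξ₁ hξ₂ (fun x hx => hpos x (hsub hx))
    (fun x hx => hmax (Ioo_subset_Icc_self (hsub hx)))
    (fun x hx => hd2 x ⟨hξ₁.1.trans_le hx.1, hx.2.trans_lt hξ₂.2⟩) (hint.mono_set hsub) h₁ h₂
  have hsplit := setIntegral_add_setIntegral_le (s := Ioo a ξ₁) (u := Ioo a b)
    (Ico_disjoint_Ico_same.mono Ioo_subset_Ico_self Ioo_subset_Ico_self) measurableSet_Ioo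
    (Ioo_subset_Ioo_right (hξ₁.2.trans (hξ₂.1.trans hξ₂.2)).le) hsub hint
    ((ae_restrict_mem measurableSet_Ioo).mono fun x hx => div_nonneg (abs_nonneg _) (hpos x hx).le)
  linarith

theorem lyapunov_never_equality (a b : ℝ) (f : ℝ → ℝ) (hab : a < b)
    (hc : ContinuousOn f (Icc a b))
    (hd1 : ∀ x ∈ Ioo a b, DifferentiableAt ℝ f x)
    (hd2 : ∀ x ∈ Ioo a b, DifferentiableAt ℝ (deriv f) x)
    (hpos : ∀ x ∈ Ioo a b, 0 < f x)
    (ha : f a = 0) (hb : f b = 0)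
    (hint : IntegrableOn (fun x => |deriv (deriv f) x| / f x) (Ioo a b)) :
    (∫ x in Ioo a b, |deriv (deriv f) x| / f x) ≠ 4 / (b - a) := by
  intro hI
  have hdiff : DifferentiableOn ℝ f (Ioo a b) := fun x hx => (hd1 x hx).differentiableWithinAt
  obtain ⟨c, ⟨hac, hcb⟩, hmax⟩ := exists_isMaxOn_mem_Ioo hab hc ha hb hpos
  have hk : 0 < f c / (c - a) := div_pos (hpos c ⟨hac, hcb⟩) (sub_pos.2 hac)
  obtain ⟨ξ₀, hξ₀, hξ₀k⟩ := exists_deriv_eq_slope f hac (hc.mono (Icc_subset_Icc_right hcb.le))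
    (hdiff.mono (Ioo_subset_Ioo_right hcb.le))
  obtain ⟨ξ₂, hξ₂, hξ₂k⟩ := exists_deriv_eq_slope f hcb (hc.mono (Icc_subset_Icc_left hac.le))
    (hdiff.mono (Ioo_subset_Ioo_left hac.le))
  obtain ⟨ξ₁, hξ₁, hξ₁k, hlast⟩ := exists_last_eq_of_continuousOn (k := f c / (c - a))
    (fun x hx => (hd2 x ⟨hξ₀.1.trans_le hx.1, hx.2.trans_lt hcb⟩).continuousAt.continuousWithinAt)
    hξ₀.2.le (by rw [hξ₀k, ha, sub_zero])
    (by rw [(hmax.isLocalMax (Icc_mem_nhds hac hcb)).deriv_eq_zero]; exact hk.ne)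
  have haξ₁ : a < ξ₁ := hξ₀.1.trans_le hξ₁.1
  have hξ₁b : ξ₁ < b := hξ₁.2.trans hcb
  have hleft := four_div_add_setIntegral_Ioo_le ⟨haξ₁, hξ₁.2⟩ hξ₂ hpos hmax hd2 hint hξ₁k
    (by rw [hξ₂k, hb, zero_sub, neg_div])
  have hflat := eq_of_setIntegral_abs_deriv_div_nonpos
    (fun x hx => hd2 x ⟨hx.1, hx.2.trans_lt hξ₁b⟩) (hint.mono_set (Ioo_subset_Ioo_right hξ₁b.le))
    (fun x hx => hpos x ⟨hx.1, hx.2.trans hξ₁b⟩) (by linarith)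
  obtain ⟨ζ, hζ, hζk⟩ := exists_deriv_eq_of_deriv_eq_on_Ioo haξ₁ hξ₁.2
    (hc.mono (Icc_subset_Icc_right hcb.le)) (hdiff.mono (Ioo_subset_Ioo_right hcb.le))
    (fun x hx => (hflat x (Ioo_subset_Ioc_self hx)).trans hξ₁k)
    (by rw [ha, sub_zero, div_mul_cancel₀ _ (sub_pos.2 hac).ne'])
  exact hlast ζ hζ hζk
end

section
/- Cordes-type generalisation setup (special case): if f is continuous on [a,b], twice differentiable on (a,b), positive in (a,b) with f(a) = f(b) = 0, then for every x₁ ∈ (a,b) at which f attains its maximum, ∫_a^b |f''|/f > (b-a)/((x₁-a)(b-x₁)). -/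
/-!
Let `M = f x₁` and let `x₀ ≤ x₁` be the first point where `f` reaches `M`. By the mean value
theorem `f' ξ = M / (x₀ - a)` for some `ξ ∈ (a, x₀)`, while `f' x₀ = 0` since `x₀` is an interior
maximum. As `f < M` on `(ξ, x₀)` and `f''` is not a.e. zero there,
`∫_ξ^x₀ |f''| / f > (∫_ξ^x₀ |f''|) / M ≥ |f' x₀ - f' ξ| / M = 1 / (x₀ - a) ≥ 1 / (x₁ - a)`.
Reflecting `x ↦ -x` gives `1 / (b - x₁)` on `(x₁, b)`, and the two bounds add up to
`(b - a) / ((x₁ - a) * (b - x₁))`.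
-/

open MeasureTheory Set

theorem enorm_sub_le_lintegral_enorm_deriv {E : Type*} [NormedAddCommGroup E] [NormedSpace ℝ E]
    [CompleteSpace E] {F : ℝ → E} {u v : ℝ} (huv : u ≤ v)
    (hF : ∀ x ∈ Icc u v, DifferentiableAt ℝ F x) :
    ‖F v - F u‖ₑ ≤ ∫⁻ x in Ioo u v, ‖deriv F x‖ₑ := by
  by_cases hfin : ∫⁻ x in Ioo u v, ‖deriv F x‖ₑ = ⊤
  · simp [hfin]
  have hint : IntegrableOn (deriv F) (Ioo u v) :=
    ⟨(stronglyMeasurable_deriv F).aestronglyMeasurable, lt_top_iff_ne_top.2 hfin⟩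
  rw [← intervalIntegral.integral_deriv_eq_sub (by rwa [uIcc_of_le huv])
      ((intervalIntegrable_iff_integrableOn_Ioo_of_le huv).2 hint),
    intervalIntegral.integral_of_le huv, integral_Ioc_eq_integral_Ioo]
  exact enorm_integral_le_lintegral_enorm _

theorem lintegral_ofReal_abs_div_const_lt {α : Type*} [MeasurableSpace α] {μ : Measure α}
    {g h : α → ℝ} {M : ℝ} (hg : AEMeasurable g μ) (hh : AEMeasurable h μ)
    (hpos : ∀ᵐ x ∂μ, 0 < h x) (hlt : ∀ᵐ x ∂μ, h x < M) (hg0 : ∃ᵐ x ∂μ, g x ≠ 0)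
    (hfin : ∫⁻ x, ENNReal.ofReal (|g x| / h x) ∂μ ≠ ⊤) :
    ∫⁻ x, ENNReal.ofReal (|g x| / M) ∂μ < ∫⁻ x, ENNReal.ofReal (|g x| / h x) ∂μ := by
  have hle : (fun x ↦ ENNReal.ofReal (|g x| / M)) ≤ᵐ[μ] fun x ↦ ENNReal.ofReal (|g x| / h x) := by
    filter_upwards [hpos, hlt] with x h0 h1
    exact ENNReal.ofReal_le_ofReal (div_le_div_of_nonneg_left (abs_nonneg _) h0 h1.le)
  refine lintegral_strict_mono_of_ae_le_of_frequently_ae_lt (hg.abs.div hh).ennreal_ofReal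
    (ne_top_of_le_ne_top hfin (lintegral_mono_ae hle)) hle ?_
  refine (hg0.and_eventually (hpos.and hlt)).mono fun x ⟨hx, h0, h1⟩ ↦ ?_
  have hgx : 0 < |g x| := abs_pos.2 hx
  exact ((ENNReal.ofReal_lt_ofReal_iff (div_pos hgx h0)).2 (div_lt_div_of_pos_left hgx h0 h1)).ne

theorem ContinuousOn.exists_first_eq {α β : Type*} [ConditionallyCompleteLinearOrder α]
    [TopologicalSpace α] [OrderTopology α] [TopologicalSpace β] [T1Space β] {f : α → β}
    {a b : α} (hab : a ≤ b) (hf : ContinuousOn f (Icc a b)) :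
    ∃ x₀ ∈ Icc a b, f x₀ = f b ∧ ∀ x ∈ Ico a x₀, f x ≠ f b := by
  set S := Icc a b ∩ f ⁻¹' {f b}
  have hbS : b ∈ S := ⟨right_mem_Icc.2 hab, rfl⟩
  have hS : BddBelow S := ⟨a, fun _ hx ↦ hx.1.1⟩
  have hx₀ : sInf S ∈ S :=
    (hf.preimage_isClosed_of_isClosed isClosed_Icc isClosed_singleton).csInf_mem ⟨b, hbS⟩ hS
  refine ⟨sInf S, hx₀.1, hx₀.2, fun x hx hfx ↦ (csInf_le hS ⟨⟨hx.1, ?_⟩, hfx⟩).not_gt hx.2⟩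
  exact hx.2.le.trans hx₀.1.2

theorem ofReal_abs_sub_deriv_div_lt_lintegral {f : ℝ → ℝ} {u v M : ℝ} (huv : u < v)
    (hf : ContinuousOn f (Ioo u v)) (hd : ∀ x ∈ Icc u v, DifferentiableAt ℝ (deriv f) x)
    (hpos : ∀ x ∈ Ioo u v, 0 < f x) (hlt : ∀ x ∈ Ioo u v, f x < M)
    (hne : deriv f u ≠ deriv f v) :
    ENNReal.ofReal (|deriv f v - deriv f u| / M) <
      ∫⁻ x in Ioo u v, ENNReal.ofReal (|deriv (deriv f) x| / f x) := by
  have hM : 0 < M := by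
    obtain ⟨x, hx⟩ := nonempty_Ioo.2 huv
    exact (hpos x hx).trans (hlt x hx)
  by_cases hfin : ∫⁻ x in Ioo u v, ENNReal.ofReal (|deriv (deriv f) x| / f x) = ⊤
  · simp [hfin]
  have hFTC : ENNReal.ofReal |deriv f v - deriv f u| ≤
      ∫⁻ x in Ioo u v, ENNReal.ofReal |deriv (deriv f) x| := by
    simpa only [Real.enorm_eq_ofReal_abs] using enorm_sub_le_lintegral_enorm_deriv huv.le hd
  have hf'' : ∃ᵐ x ∂volume.restrict (Ioo u v), deriv (deriv f) x ≠ 0 := by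
    intro h0
    have hzero : ∫⁻ x in Ioo u v, ENNReal.ofReal |deriv (deriv f) x| = 0 :=
      (lintegral_congr_ae (h0.mono fun x hx ↦ by simp [not_not.1 hx])).trans lintegral_zero
    rw [hzero, nonpos_iff_eq_zero, ENNReal.ofReal_eq_zero, abs_nonpos_iff, sub_eq_zero] at hFTC
    exact hne hFTC.symm
  calc ENNReal.ofReal (|deriv f v - deriv f u| / M)
      = ENNReal.ofReal |deriv f v - deriv f u| / ENNReal.ofReal M := ENNReal.ofReal_div_of_pos hM
    _ ≤ (∫⁻ x in Ioo u v, ENNReal.ofReal |deriv (deriv f) x|) / ENNReal.ofReal M := by gcongr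
    _ = ∫⁻ x in Ioo u v, ENNReal.ofReal (|deriv (deriv f) x| / M) := by
      simp_rw [ENNReal.ofReal_div_of_pos hM, ENNReal.div_eq_inv_mul]
      exact (lintegral_const_mul _ (measurable_deriv _).abs.ennreal_ofReal).symm
    _ < _ := lintegral_ofReal_abs_div_const_lt (measurable_deriv _).aemeasurable
        (hf.aemeasurable measurableSet_Ioo)
        ((ae_restrict_iff' measurableSet_Ioo).2 (.of_forall hpos))
        ((ae_restrict_iff' measurableSet_Ioo).2 (.of_forall hlt)) hf'' hfin

theorem ofReal_inv_sub_left_lt_lintegral {f : ℝ → ℝ} {a x₁ c : ℝ} (hax₁ : a < x₁) (hx₁c : x₁ < c)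
    (hc : ContinuousOn f (Icc a x₁)) (hd1 : ∀ x ∈ Ioo a x₁, DifferentiableAt ℝ f x)
    (hd2 : ∀ x ∈ Ioc a x₁, DifferentiableAt ℝ (deriv f) x)
    (hpos : ∀ x ∈ Ioo a x₁, 0 < f x) (ha : f a = 0) (hmax : ∀ x ∈ Ioo a c, f x ≤ f x₁) :
    ENNReal.ofReal (x₁ - a)⁻¹ <
      ∫⁻ x in Ioo a x₁, ENNReal.ofReal (|deriv (deriv f) x| / f x) := by
  have hM : 0 < f x₁ := by
    obtain ⟨x, hx⟩ := nonempty_Ioo.2 hax₁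
    exact (hpos x hx).trans_le (hmax x ⟨hx.1, hx.2.trans hx₁c⟩)
  obtain ⟨x₀, hx₀, hfx₀, hfirst⟩ := hc.exists_first_eq hax₁.le
  have hax₀ : a < x₀ := hx₀.1.lt_of_ne fun h ↦ hM.ne' (by rw [← hfx₀, ← h, ha])
  have hx₀c : x₀ < c := hx₀.2.trans_lt hx₁c
  have hdx₀ : deriv f x₀ = 0 := by
    refine IsLocalMax.deriv_eq_zero (Filter.mem_of_superset (Ioo_mem_nhds hax₀ hx₀c) ?_)
    exact fun x hx ↦ hfx₀ ▸ hmax x hx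
  obtain ⟨ξ, hξ, hdξ⟩ := exists_deriv_eq_slope f hax₀ (hc.mono (Icc_subset_Icc_right hx₀.2))
    fun x hx ↦ (hd1 x ⟨hx.1, hx.2.trans_le hx₀.2⟩).differentiableWithinAt
  rw [hfx₀, ha, sub_zero] at hdξ
  have hsub : Ioo ξ x₀ ⊆ Ioo a x₁ := Ioo_subset_Ioo hξ.1.le hx₀.2
  have hlt := ofReal_abs_sub_deriv_div_lt_lintegral (M := f x₁) hξ.2
    ((hc.mono Ioo_subset_Icc_self).mono hsub)
    (fun x hx ↦ hd2 x ⟨hξ.1.trans_le hx.1, hx.2.trans hx₀.2⟩)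
    (fun x hx ↦ hpos x (hsub hx))
    (fun x hx ↦ (hmax x ⟨hξ.1.trans hx.1, hx.2.trans hx₀c⟩).lt_of_ne
      (hfirst x ⟨hξ.1.le.trans hx.1.le, hx.2⟩))
    (by rw [hdξ, hdx₀]; exact (div_pos hM (sub_pos.2 hax₀)).ne')
  have hval : |deriv f x₀ - deriv f ξ| / f x₁ = (x₀ - a)⁻¹ := by
    rw [hdξ, hdx₀, zero_sub, abs_neg, abs_of_pos (div_pos hM (sub_pos.2 hax₀))]
    field_simp
  calc ENNReal.ofReal (x₁ - a)⁻¹ ≤ ENNReal.ofReal (x₀ - a)⁻¹ := by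
        gcongr
        exact hx₀.2
    _ < _ := hval ▸ hlt
    _ ≤ _ := lintegral_mono_set hsub

theorem ofReal_inv_sub_right_lt_lintegral {f : ℝ → ℝ} {c x₁ b : ℝ} (hcx₁ : c < x₁) (hx₁b : x₁ < b)
    (hc : ContinuousOn f (Icc x₁ b)) (hd1 : ∀ x ∈ Ioo x₁ b, DifferentiableAt ℝ f x)
    (hd2 : ∀ x ∈ Ico x₁ b, DifferentiableAt ℝ (deriv f) x)
    (hpos : ∀ x ∈ Ioo x₁ b, 0 < f x) (hb : f b = 0) (hmax : ∀ x ∈ Ioo c b, f x ≤ f x₁) :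
    ENNReal.ofReal (b - x₁)⁻¹ <
      ∫⁻ x in Ioo x₁ b, ENNReal.ofReal (|deriv (deriv f) x| / f x) := by
  have hderiv : deriv (fun x ↦ f (-x)) = fun x ↦ -deriv f (-x) := funext (deriv_comp_neg f)
  have hderiv2 : deriv (deriv fun x ↦ f (-x)) = fun x ↦ deriv (deriv f) (-x) := by
    rw [hderiv]
    funext x
    rw [deriv.fun_neg, deriv_comp_neg, neg_neg]
  have hneg {s t : ℝ} {x : ℝ} (hx : x ∈ Ioo (-t) (-s)) : -x ∈ Ioo s t :=
    ⟨lt_neg.1 hx.2, neg_lt.1 hx.1⟩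
  have hreflect := ofReal_inv_sub_left_lt_lintegral (f := fun x ↦ f (-x)) (neg_lt_neg hx₁b)
    (neg_lt_neg hcx₁) (hc.comp continuousOn_neg fun x hx ↦ ⟨le_neg.1 hx.2, neg_le.1 hx.1⟩)
    (fun x hx ↦ (hd1 (-x) (hneg hx)).comp x differentiableAt_id.neg)
    (fun x hx ↦ by
      rw [hderiv]
      exact ((hd2 (-x) ⟨le_neg.1 hx.2, neg_lt.1 hx.1⟩).comp x differentiableAt_id.neg).neg)
    (fun x hx ↦ hpos (-x) (hneg hx)) (by simpa using hb)
    (fun x hx ↦ by simpa using hmax (-x) (hneg hx))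
  rw [sub_neg_eq_add, neg_add_eq_sub, hderiv2] at hreflect
  rwa [← (Measure.measurePreserving_neg volume).setLIntegral_comp_preimage_emb
    measurableEmbedding_neg, show Neg.neg ⁻¹' Ioo x₁ b = Ioo (-b) (-x₁) from neg_Ioo x₁ b]

theorem lyapunov_refined_general (a b x₁ : ℝ) (f : ℝ → ℝ)
    (hc : ContinuousOn f (Icc a b))
    (hd1 : ∀ x ∈ Ioo a b, DifferentiableAt ℝ f x)
    (hd2 : ∀ x ∈ Ioo a b, DifferentiableAt ℝ (deriv f) x)
    (hpos : ∀ x ∈ Ioo a b, 0 < f x)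
    (ha : f a = 0) (hb : f b = 0)
    (hx₁ : x₁ ∈ Ioo a b)
    (hmax : ∀ x ∈ Icc a b, f x ≤ f x₁) :
    ENNReal.ofReal ((b - a) / ((x₁ - a) * (b - x₁))) <
      ∫⁻ x in Ioo a b, ENNReal.ofReal (|deriv (deriv f) x| / f x) := by
  obtain ⟨hax₁, hx₁b⟩ := hx₁
  have hmax' : ∀ x ∈ Ioo a b, f x ≤ f x₁ := fun x hx ↦ hmax x (Ioo_subset_Icc_self hx)
  have hleft := ofReal_inv_sub_left_lt_lintegral hax₁ hx₁b
    (hc.mono (Icc_subset_Icc_right hx₁b.le)) (fun x hx ↦ hd1 x ⟨hx.1, hx.2.trans hx₁b⟩)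
    (fun x hx ↦ hd2 x ⟨hx.1, hx.2.trans_lt hx₁b⟩) (fun x hx ↦ hpos x ⟨hx.1, hx.2.trans hx₁b⟩)
    ha hmax'
  have hright := ofReal_inv_sub_right_lt_lintegral hax₁ hx₁b
    (hc.mono (Icc_subset_Icc_left hax₁.le)) (fun x hx ↦ hd1 x ⟨hax₁.trans hx.1, hx.2⟩)
    (fun x hx ↦ hd2 x ⟨hax₁.trans_le hx.1, hx.2⟩) (fun x hx ↦ hpos x ⟨hax₁.trans hx.1, hx.2⟩)
    hb hmax'
  have hsplit : (b - a) / ((x₁ - a) * (b - x₁)) = (x₁ - a)⁻¹ + (b - x₁)⁻¹ := by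
    field_simp [(sub_pos.2 hax₁).ne', (sub_pos.2 hx₁b).ne']
    ring
  rw [hsplit, ENNReal.ofReal_add (inv_nonneg.2 (sub_pos.2 hax₁).le)
    (inv_nonneg.2 (sub_pos.2 hx₁b).le)]
  calc _ < _ := ENNReal.add_lt_add hleft hright
    _ = ∫⁻ x in Ioo a x₁ ∪ Ioo x₁ b, ENNReal.ofReal (|deriv (deriv f) x| / f x) :=
      (lintegral_union measurableSet_Ioo
        (Ico_disjoint_Ico_same.mono Ioo_subset_Ico_self Ioo_subset_Ico_self)).symm
    _ ≤ _ := lintegral_mono_set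
      (union_subset (Ioo_subset_Ioo_right hx₁b.le) (Ioo_subset_Ioo_left hax₁.le))

theorem lyapunov_refined (a b x₁ : ℝ) (f : ℝ → ℝ) (hab : a < b)
    (hc : ContinuousOn f (Icc a b))
    (hd1 : ∀ x ∈ Ioo a b, DifferentiableAt ℝ f x)
    (hd2 : ∀ x ∈ Ioo a b, DifferentiableAt ℝ (deriv f) x)
    (hpos : ∀ x ∈ Ioo a b, 0 < f x)
    (ha : f a = 0) (hb : f b = 0)
    (hx₁ : x₁ ∈ Ioo a b)
    (hmax : ∀ x ∈ Icc a b, f x ≤ f x₁) :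
    ENNReal.ofReal ((b - a) / ((x₁ - a) * (b - x₁))) <
      ∫⁻ x in Ioo a b, ENNReal.ofReal (|deriv (deriv f) x| / f x) :=
  lyapunov_refined_general a b x₁ f hc hd1 hd2 hpos ha hb hx₁ hmax
end
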